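/- Let (T_n) be a sequence of Schwartz operators on L²(ℝ^N) that is Cauchy with respect to every seminorm ‖·‖_{α,α',β,β'} (α, α', β, β' ∈ ℕ^N). Then there exists a Schwartz operator T such that ‖T − T_n‖_{α,α',β,β'} → 0 for every α, α', β, β' ∈ ℕ^N. In other words, the space S(H) of Schwartz operators is complete (a Fréchet space) for the topology generated by these countably many seminorms. -/

import Mathlib

/-! The seminorm with `α = α' = β = β' = 0` dominates the operator norm, since Schwartz functions
are dense in L², so the sequence converges in operator norm to some `L`. Each quantity
`|⟨u, (T m - T n) v⟩|` is continuous in `T m`, so the Cauchy bounds pass to the limit `m → ∞`,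
which is convergence in every seminorm; and `L = (L - T M) + T M` is then a Schwartz operator. -/

open MeasureTheory SchwartzMap Complex

noncomputable section

/-- Configuration space ℝ^N. -/
abbrev Cfg (N : ℕ) := EuclideanSpace ℝ (Fin N)

/-- The Hilbert space L²(ℝ^N). -/
abbrev L2 (N : ℕ) := MeasureTheory.Lp ℂ 2 (volume : Measure (Cfg N))

theorem schwartz_memL2 {N : ℕ} (f : 𝓢(Cfg N, ℂ)) :
    MeasureTheory.MemLp (⇑f) 2 (volume : Measure (Cfg N)) := by
  rw [MeasureTheory.memLp_two_iff_integrable_sq_norm f.continuous.aestronglyMeasurable]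
  have h1 : MeasureTheory.Integrable (fun x => (SchwartzMap.seminorm ℝ 0 0 f) * ‖f x‖) volume :=
    f.integrable.norm.const_mul _
  refine h1.mono ((f.continuous.norm.pow 2).aestronglyMeasurable) ?_
  refine Filter.Eventually.of_forall fun x => ?_
  have h2 := SchwartzMap.norm_le_seminorm ℝ f x
  have h3 : ‖f x‖ ^ 2 ≤ (SchwartzMap.seminorm ℝ 0 0 f) * ‖f x‖ := by
    rw [sq]; exact mul_le_mul_of_nonneg_right h2 (norm_nonneg _)
  calc ‖‖f x‖ ^ 2‖ = ‖f x‖ ^ 2 := by rw [Real.norm_of_nonneg (by positivity)]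
    _ ≤ (SchwartzMap.seminorm ℝ 0 0 f) * ‖f x‖ := h3
    _ ≤ ‖(SchwartzMap.seminorm ℝ 0 0 f) * ‖f x‖‖ := le_abs_self _

/-- Embedding of Schwartz functions into L². -/
def toL2 {N : ℕ} (f : 𝓢(Cfg N, ℂ)) : L2 N := (schwartz_memL2 f).toLp ⇑f

/-- The position operator Q_i (multiplication by the i-th coordinate). -/
def Qop {N : ℕ} (i : Fin N) (f : 𝓢(Cfg N, ℂ)) : 𝓢(Cfg N, ℂ) :=
  SchwartzMap.bilinLeftCLM ((ContinuousLinearMap.lsmul ℝ ℝ : ℝ →L[ℝ] ℂ →L[ℝ] ℂ).flip)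
    ((EuclideanSpace.proj i : Cfg N →L[ℝ] ℝ).hasTemperateGrowth) f

/-- The momentum operator P_i = -i ∂/∂q_i. -/
def Pop {N : ℕ} (i : Fin N) (f : 𝓢(Cfg N, ℂ)) : 𝓢(Cfg N, ℂ) :=
  (-Complex.I) • (LineDeriv.lineDerivOpCLM ℝ 𝓢(Cfg N, ℂ) (EuclideanSpace.single i (1:ℝ)) f)

/-- `opPow A α` is the operator `A₁^{α₁} ∘ ⋯ ∘ A_N^{α_N}`. -/
def opPow {σ : Type*} {N : ℕ} (A : Fin N → σ → σ) (α : Fin N → ℕ) : σ → σ :=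
  (List.ofFn fun i => (A i)^[α i]).foldr (· ∘ ·) id

/-- `Q^α P^β` acting on Schwartz functions. -/
def QP {N : ℕ} (α β : Fin N → ℕ) (f : 𝓢(Cfg N, ℂ)) : 𝓢(Cfg N, ℂ) :=
  opPow Qop α (opPow Pop β f)

/-- `P^β Q^α` acting on Schwartz functions. -/
def PQ {N : ℕ} (β α : Fin N → ℕ) (f : 𝓢(Cfg N, ℂ)) : 𝓢(Cfg N, ℂ) :=
  opPow Pop β (opPow Qop α f)

/-- The set of values `|⟨P^β Q^α ψ, T P^{β'} Q^{α'} φ⟩|` over normalized Schwartz `ψ, φ`. -/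
def schwartzOpSet {N : ℕ} (T : L2 N →L[ℂ] L2 N) (α α' β β' : Fin N → ℕ) : Set ℝ :=
  { r | ∃ ψ φ : 𝓢(Cfg N, ℂ), ‖toL2 ψ‖ ≤ 1 ∧ ‖toL2 φ‖ ≤ 1 ∧
      r = ‖(inner ℂ (toL2 (PQ β α ψ)) (T (toL2 (PQ β' α' φ))) : ℂ)‖ }

/-- The seminorm `‖T‖_{α,α',β,β'}` (as a supremum). -/
def opSeminorm {N : ℕ} (T : L2 N →L[ℂ] L2 N) (α α' β β' : Fin N → ℕ) : ℝ :=
  sSup (schwartzOpSet T α α' β β')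

/-- A bounded operator on L²(ℝ^N) is a Schwartz operator if all the quantities
`‖T‖_{α,α',β,β'}` are finite. -/
def IsSchwartzOp {N : ℕ} (T : L2 N →L[ℂ] L2 N) : Prop :=
  ∀ α α' β β' : Fin N → ℕ, BddAbove (schwartzOpSet T α α' β β')

open Filter Topology

theorem ContinuousLinearMap.opNorm_le_of_dense_inner_le {𝕜 E : Type*} [RCLike 𝕜]
    [NormedAddCommGroup E] [InnerProductSpace 𝕜 E] {s : Set E} (hs : Dense s) (A : E →L[𝕜] E)
    {C : ℝ} (h : ∀ x ∈ s, ∀ y ∈ s, ‖x‖ ≤ 1 → ‖y‖ ≤ 1 → ‖(inner 𝕜 x (A y) : 𝕜)‖ ≤ C) :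
    ‖A‖ ≤ C := by
  let _ : NormedSpace ℝ E := NormedSpace.restrictScalars ℝ 𝕜 E
  set B := {x ∈ s | ‖x‖ ≤ 1}
  have hB : Metric.closedBall (0 : E) 1 ⊆ closure B := by
    rw [← closure_ball (0 : E) one_ne_zero]
    refine closure_minimal ((hs.open_subset_closure_inter Metric.isOpen_ball).trans
      (closure_mono ?_)) isClosed_closure
    rintro x ⟨hx, hxs⟩
    exact ⟨hxs, (mem_ball_zero_iff.1 hx).le⟩
  have hball : ∀ x y : E, ‖x‖ ≤ 1 → ‖y‖ ≤ 1 → ‖(inner 𝕜 x (A y) : 𝕜)‖ ≤ C := by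
    intro x y hx hy
    have hxy : (x, y) ∈ closure (B ×ˢ B) := by
      rw [closure_prod_eq]
      exact ⟨hB (mem_closedBall_zero_iff.2 hx), hB (mem_closedBall_zero_iff.2 hy)⟩
    have hclosed : IsClosed {p : E × E | ‖(inner 𝕜 p.1 (A p.2) : 𝕜)‖ ≤ C} :=
      isClosed_le (by fun_prop) continuous_const
    exact closure_minimal (fun p hp => h _ hp.1.1 _ hp.2.1 hp.1.2 hp.2.2) hclosed hxy
  have hC : 0 ≤ C := by simpa using hball 0 0
  refine A.opNorm_le_of_unit_norm hC fun y hy => ?_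
  rcases eq_or_ne (A y) 0 with hAy | hAy
  · simpa [hAy] using hC
  have hunit : ‖((‖A y‖⁻¹ : ℝ) : 𝕜) • A y‖ ≤ 1 := by
    rw [norm_smul, RCLike.norm_ofReal, abs_inv, abs_norm, inv_mul_cancel₀ (norm_ne_zero_iff.2 hAy)]
  have := hball _ y hunit hy.le
  rwa [inner_smul_left, inner_self_eq_norm_sq_to_K, norm_mul, RCLike.norm_conj,
    RCLike.norm_ofReal, norm_pow, RCLike.norm_ofReal, abs_inv, abs_norm, sq,
    inv_mul_cancel_left₀ (norm_ne_zero_iff.2 hAy)] at this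

theorem denseRange_toL2 {N : ℕ} : DenseRange (toL2 (N := N)) :=
  SchwartzMap.denseRange_toLpCLM (F := ℂ) (μ := volume) ENNReal.ofNat_ne_top

theorem opPow_zero {σ : Type*} {N : ℕ} (A : Fin N → σ → σ) : opPow A 0 = id := by
  have hid (n : ℕ) : (List.replicate n (id : σ → σ)).foldr (· ∘ ·) id = id := by
    induction n with
    | zero => rfl
    | succ n ih => simp [List.replicate_succ, ih]
  simpa [opPow] using hid N

theorem norm_le_of_schwartzOpSet_zero_le {N : ℕ} {A : L2 N →L[ℂ] L2 N} {ε : ℝ}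
    (h : ∀ r ∈ schwartzOpSet A 0 0 0 0, r ≤ ε) : ‖A‖ ≤ ε := by
  refine A.opNorm_le_of_dense_inner_le denseRange_toL2 ?_
  rintro _ ⟨ψ, rfl⟩ _ ⟨φ, rfl⟩ hψ hφ
  exact h _ ⟨ψ, φ, hψ, hφ, by simp only [PQ, opPow_zero, id]⟩

theorem schwartzOpSet_le_of_tendsto {N : ℕ} {ι : Type*} {l : Filter ι} [l.NeBot]
    {W : ι → L2 N →L[ℂ] L2 N} {A : L2 N →L[ℂ] L2 N} (hW : Tendsto W l (𝓝 A))
    {α α' β β' : Fin N → ℕ} {ε : ℝ} (h : ∀ᶠ m in l, ∀ r ∈ schwartzOpSet (W m) α α' β β', r ≤ ε) :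
    ∀ r ∈ schwartzOpSet A α α' β β', r ≤ ε := by
  rintro _ ⟨ψ, φ, hψ, hφ, rfl⟩
  have hcont : Continuous fun B : L2 N →L[ℂ] L2 N =>
      ‖(inner ℂ (toL2 (PQ β α ψ)) (B (toL2 (PQ β' α' φ))) : ℂ)‖ := by fun_prop
  exact le_of_tendsto ((hcont.tendsto A).comp hW) (h.mono fun m hm => hm _ ⟨ψ, φ, hψ, hφ, rfl⟩)

theorem bddAbove_schwartzOpSet_add {N : ℕ} {A B : L2 N →L[ℂ] L2 N} {α α' β β' : Fin N → ℕ}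
    (hA : BddAbove (schwartzOpSet A α α' β β')) (hB : BddAbove (schwartzOpSet B α α' β β')) :
    BddAbove (schwartzOpSet (A + B) α α' β β') := by
  obtain ⟨a, ha⟩ := hA
  obtain ⟨b, hb⟩ := hB
  refine ⟨a + b, ?_⟩
  rintro _ ⟨ψ, φ, hψ, hφ, rfl⟩
  rw [add_apply, inner_add_right]
  exact (norm_add_le _ _).trans (add_le_add (ha ⟨ψ, φ, hψ, hφ, rfl⟩) (hb ⟨ψ, φ, hψ, hφ, rfl⟩))

/-- The space of Schwartz operators is complete: every sequence of Schwartz operators which is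
Cauchy with respect to all the seminorms `‖·‖_{α,α',β,β'}` converges, in all these seminorms,
to a Schwartz operator. -/
theorem schwartzOp_complete {N : ℕ} (T : ℕ → (L2 N →L[ℂ] L2 N))
    (hS : ∀ n, IsSchwartzOp (T n))
    (hC : ∀ (α α' β β' : Fin N → ℕ) (ε : ℝ), 0 < ε → ∃ M : ℕ, ∀ m n : ℕ, M ≤ m → M ≤ n →
      ∀ r ∈ schwartzOpSet (T m - T n) α α' β β', r ≤ ε) :
    ∃ L : L2 N →L[ℂ] L2 N, IsSchwartzOp L ∧
      ∀ (α α' β β' : Fin N → ℕ) (ε : ℝ), 0 < ε → ∃ M : ℕ, ∀ n : ℕ, M ≤ n →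
        ∀ r ∈ schwartzOpSet (L - T n) α α' β β', r ≤ ε := by
  have hcauchy : CauchySeq T := by
    refine Metric.cauchySeq_iff.2 fun ε hε => ?_
    obtain ⟨M, hM⟩ := hC 0 0 0 0 (ε / 2) (half_pos hε)
    refine ⟨M, fun m hm n hn => ?_⟩
    rw [dist_eq_norm]
    exact (norm_le_of_schwartzOpSet_zero_le (hM m n hm hn)).trans_lt (half_lt_self hε)
  obtain ⟨L, hL⟩ := cauchySeq_tendsto_of_complete hcauchy
  have hconv : ∀ (α α' β β' : Fin N → ℕ) (ε : ℝ), 0 < ε → ∃ M : ℕ, ∀ n : ℕ, M ≤ n →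
      ∀ r ∈ schwartzOpSet (L - T n) α α' β β', r ≤ ε := by
    intro α α' β β' ε hε
    obtain ⟨M, hM⟩ := hC α α' β β' ε hε
    exact ⟨M, fun n hn => schwartzOpSet_le_of_tendsto (hL.sub_const (T n))
      ((eventually_ge_atTop M).mono fun m hm => hM m n hm hn)⟩
  refine ⟨L, fun α α' β β' => ?_, hconv⟩
  obtain ⟨M, hM⟩ := hconv α α' β β' 1 one_pos
  simpa using bddAbove_schwartzOpSet_add ⟨1, hM M le_rfl⟩ (hS M α α' β β')

end
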